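/- arXiv:1404.4291 — 3 statements merged into one kernel-verified Lean document; each statement's English description precedes it below -/
import Mathlib

section
/- Let r be prime, a, b not divisible by r, 1 + a + b ≡ 0 (mod r). Fix i with 0 < i < r, set ν1^i = i/r, ν2^i = (ia mod r)/r, ν3^i = (ib mod r)/r and assume they sum to 1. If positive integers c1', c2' satisfy c1'·ν1^i + c2'·ν2^i = 1, then for every j with 0 < j < r (with ν1^j, ν2^j, ν3^j ∈ [0,1) defined analogously), c1'·ν1^j + c2'·ν2^j ≥ 1. -/
/-!
Clearing denominators, `c₁' ν₁ʲ + c₂' ν₂ʲ = S(j) / r` with the integer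
`S(j) = c₁' (j mod r) + c₂' (ja mod r) ≡ j (c₁' + c₂' a) (mod r)`.
The hypothesis `S(i) = r` together with `r ∤ i` and the primality of `r` gives `r ∣ c₁' + c₂' a`,
so every `S(j)` with `r ∤ j` is a multiple of `r`; it is positive, hence at least `r`.
-/

def sectorSum (r a c₁ c₂ j : ℤ) : ℤ :=
  c₁ * (j % r) + c₂ * (j * a % r)

section SectorSum

variable {r a c₁ c₂ : ℤ}

theorem sectorSum_modEq (j : ℤ) : sectorSum r a c₁ c₂ j ≡ j * (c₁ + c₂ * a) [ZMOD r] := by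
  convert ((Int.mod_modEq j r).mul_left c₁).add ((Int.mod_modEq (j * a) r).mul_left c₂) using 2
  · rfl
  · ring

theorem dvd_of_dvd_sectorSum (hr : Prime r) {i : ℤ} (hri : ¬ r ∣ i)
    (hi : r ∣ sectorSum r a c₁ c₂ i) : r ∣ c₁ + c₂ * a :=
  (hr.dvd_or_dvd ((Int.ModEq.dvd_iff (sectorSum_modEq i)).mp hi)).resolve_left hri

theorem le_sectorSum (hr : 0 < r) (hc₁ : 0 < c₁) (hc₂ : 0 ≤ c₂) (hdvd : r ∣ c₁ + c₂ * a)
    {j : ℤ} (hrj : ¬ r ∣ j) : r ≤ sectorSum r a c₁ c₂ j := by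
  have hj : 0 < j % r := (Int.emod_pos_of_not_dvd hrj).resolve_left hr.ne'
  have ha : 0 ≤ j * a % r := Int.emod_nonneg _ hr.ne'
  have hpos : 0 < sectorSum r a c₁ c₂ j := by unfold sectorSum; positivity
  exact Int.le_of_dvd hpos ((Int.ModEq.dvd_iff (sectorSum_modEq j)).mpr (hdvd.mul_left j))

theorem weighted_div_eq_sectorSum_div (j : ℤ) :
    (c₁ : ℚ) * ((j % r : ℤ) / r) + c₂ * ((j * a % r : ℤ) / r) = sectorSum r a c₁ c₂ j / r := by
  unfold sectorSum
  push_cast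
  ring

end SectorSum

theorem weighted_sum_ge_one_all_sectors_general
    (r a : ℤ) (hr : Prime r)
    (ν1 ν2 : ℤ → ℚ)
    (hν1 : ∀ j, ν1 j = ((j % r : ℤ) : ℚ) / r)
    (hν2 : ∀ j, ν2 j = (((j * a) % r : ℤ) : ℚ) / r)
    (i : ℤ) (hi0 : 0 < i) (hir : i < r)
    (c1' c2' : ℤ) (hc1 : 0 < c1') (hc2 : 0 < c2')
    (heq : (c1' : ℚ) * ν1 i + (c2' : ℚ) * ν2 i = 1) :
    ∀ j : ℤ, 0 < j → j < r → 1 ≤ (c1' : ℚ) * ν1 j + (c2' : ℚ) * ν2 j := by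
  intro j hj0 hjr
  have hr0 : 0 < r := hi0.trans hir
  have hrQ : (0 : ℚ) < r := by exact_mod_cast hr0
  have not_dvd {k : ℤ} (hk0 : 0 < k) (hkr : k < r) : ¬ r ∣ k :=
    fun h => (Int.le_of_dvd hk0 h).not_gt hkr
  have hSi : sectorSum r a c1' c2' i = r := by
    rw [hν1, hν2, weighted_div_eq_sectorSum_div, div_eq_one_iff_eq hrQ.ne'] at heq
    exact_mod_cast heq
  have hdvd : r ∣ c1' + c2' * a :=
    dvd_of_dvd_sectorSum hr (not_dvd hi0 hir) (by rw [hSi])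
  have hSj := le_sectorSum hr0 hc1 hc2.le hdvd (not_dvd hj0 hjr)
  rw [hν1, hν2, weighted_div_eq_sectorSum_div, one_le_div hrQ]
  exact_mod_cast hSj

/-- If `r` is prime, `r ∤ a`, `r ∤ b`, `1 + a + b ≡ 0 (mod r)`, and positive integers
`c1', c2'` satisfy `c1'·ν1^i + c2'·ν2^i = 1` for some sector `i` (whose triple sums to 1),
then for every sector `j` with `0 < j < r` we have `c1'·ν1^j + c2'·ν2^j ≥ 1`. -/
theorem weighted_sum_ge_one_all_sectors
    (r a b : ℤ) (hr : Prime r) (hra : ¬ r ∣ a) (hrb : ¬ r ∣ b)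
    (hCY : r ∣ (1 + a + b))
    (ν1 ν2 ν3 : ℤ → ℚ)
    (hν1 : ∀ j, ν1 j = ((j % r : ℤ) : ℚ) / r)
    (hν2 : ∀ j, ν2 j = (((j * a) % r : ℤ) : ℚ) / r)
    (hν3 : ∀ j, ν3 j = (((j * b) % r : ℤ) : ℚ) / r)
    (i : ℤ) (hi0 : 0 < i) (hir : i < r)
    (hsumi : ν1 i + ν2 i + ν3 i = 1)
    (c1' c2' : ℤ) (hc1 : 0 < c1') (hc2 : 0 < c2')
    (heq : (c1' : ℚ) * ν1 i + (c2' : ℚ) * ν2 i = 1) :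
    ∀ j : ℤ, 0 < j → j < r → 1 ≤ (c1' : ℚ) * ν1 j + (c2' : ℚ) * ν2 j :=
  weighted_sum_ge_one_all_sectors_general r a hr ν1 ν2 hν1 hν2 i hi0 hir c1' c2' hc1 hc2 heq
end

section
/- Let (ν1, ν2, ν3) be positive rationals summing to 1, each with denominator dividing r, corresponding to the α-th twisted sector. Suppose (c1, c2, c3) is a triple of integers with c3 ≤ -2, c1, c2 ≥ 0, and c1·ν1 + c2·ν2 + c3·ν3 = c3 + 1. Then setting n = -c3, the triples of rationals (n·ν1 mod 1 appropriately taken) satisfy: for β corresponding to the sector (n-1)·α and γ corresponding to the sector n·α (i.e., ν_k^β ≡ (n-1)·ν_k mod 1 and ν_k^γ ≡ n·ν_k mod 1 with values in [0,1)), we have c1·ν1^γ + c2·ν2^γ + c3·ν3^γ = 0 and c1·ν1^β + c2·ν2^β + c3·ν3^β = -1. -/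
/-! Adding `n = -c₃` times `ν₁ + ν₂ + ν₃ = 1` to the linear relation gives
`(c₁ + n) ν₁ + (c₂ + n) ν₂ = 1`, so `n ν₁ + n ν₂ ≤ 1`. Hence for `k = n` and `k = n - 1`
no reduction mod 1 happens in the first two coordinates, while `k ν₃ = k - (k ν₁ + k ν₂)`
reduces to `1 - k ν₁ - k ν₂`. Substituting these values, both claimed identities become
linear consequences of the relation. -/

section

variable {α : Type*} [Field α] [LinearOrder α] [IsStrictOrderedRing α] [FloorRing α]

theorem Int.fract_intCast_sub_of_pos_of_le_one (m : ℤ) {x : α} (hx₀ : 0 < x) (hx₁ : x ≤ 1) :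
    Int.fract ((m : α) - x) = 1 - x := by
  have hsplit : (m : α) - x = (1 - x) + ((m - 1 : ℤ) : α) := by push_cast; ring
  rw [hsplit, Int.fract_add_intCast, Int.fract_eq_self]
  constructor <;> linarith

theorem fract_intCast_mul_of_add_eq_one {ν₁ ν₂ ν₃ : α} (h₁ : 0 < ν₁) (h₂ : 0 < ν₂)
    (hsum : ν₁ + ν₂ + ν₃ = 1) {k : ℤ} (hk : 0 < k) (hle : k * ν₁ + k * ν₂ ≤ 1) :
    Int.fract ((k : α) * ν₁) = k * ν₁ ∧ Int.fract ((k : α) * ν₂) = k * ν₂ ∧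
      Int.fract ((k : α) * ν₃) = 1 - k * ν₁ - k * ν₂ := by
  have hk' : (0 : α) < k := by exact_mod_cast hk
  have hkν₁ : 0 < (k : α) * ν₁ := mul_pos hk' h₁
  have hkν₂ : 0 < (k : α) * ν₂ := mul_pos hk' h₂
  have hν₃ : (k : α) * ν₃ = k - (k * ν₁ + k * ν₂) := by linear_combination (k : α) * hsum
  refine ⟨Int.fract_eq_self.2 ⟨hkν₁.le, by linarith⟩,
    Int.fract_eq_self.2 ⟨hkν₂.le, by linarith⟩, ?_⟩
  rw [hν₃, Int.fract_intCast_sub_of_pos_of_le_one k (by linarith) hle]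
  ring

end

theorem case2_singlet_gives_interior_deformation_general
    (ν1 ν2 ν3 : ℚ)
    (h1 : 0 < ν1) (h2 : 0 < ν2)
    (hsum : ν1 + ν2 + ν3 = 1)
    (c1 c2 c3 : ℤ) (hc1 : 0 ≤ c1) (hc2 : 0 ≤ c2) (hc3 : c3 ≤ -2)
    (heq : (c1 : ℚ) * ν1 + c2 * ν2 + c3 * ν3 = c3 + 1)
    (n : ℤ) (hn : n = -c3)
    (ν1β ν2β ν3β ν1γ ν2γ ν3γ : ℚ)
    (hβ1 : ν1β = Int.fract (((n : ℚ) - 1) * ν1))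
    (hβ2 : ν2β = Int.fract (((n : ℚ) - 1) * ν2))
    (hβ3 : ν3β = Int.fract (((n : ℚ) - 1) * ν3))
    (hγ1 : ν1γ = Int.fract ((n : ℚ) * ν1))
    (hγ2 : ν2γ = Int.fract ((n : ℚ) * ν2))
    (hγ3 : ν3γ = Int.fract ((n : ℚ) * ν3)) :
    (c1 : ℚ) * ν1γ + c2 * ν2γ + c3 * ν3γ = 0 ∧
    (c1 : ℚ) * ν1β + c2 * ν2β + c3 * ν3β = -1 := by
  have hn' : (n : ℚ) = -c3 := by rw [hn]; push_cast; ring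
  have hc1' : (0 : ℚ) ≤ c1 := by exact_mod_cast hc1
  have hc2' : (0 : ℚ) ≤ c2 := by exact_mod_cast hc2
  have hkey : ((c1 : ℚ) + n) * ν1 + ((c2 : ℚ) + n) * ν2 = 1 := by
    rw [hn']; linear_combination heq - (c3 : ℚ) * hsum
  have hle : (n : ℚ) * ν1 + n * ν2 ≤ 1 := by
    nlinarith [mul_nonneg hc1' h1.le, mul_nonneg hc2' h2.le]
  obtain ⟨eγ1, eγ2, eγ3⟩ := fract_intCast_mul_of_add_eq_one h1 h2 hsum (k := n) (by omega) hle
  obtain ⟨eβ1, eβ2, eβ3⟩ := fract_intCast_mul_of_add_eq_one h1 h2 hsum (k := n - 1) (by omega)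
    (by push_cast; linarith)
  push_cast at eβ1 eβ2 eβ3
  rw [hγ1, hγ2, hγ3, hβ1, hβ2, hβ3, eγ1, eγ2, eγ3, eβ1, eβ2, eβ3, hn']
  constructor
  · linear_combination (-(c3 : ℚ)) * heq + (c3 : ℚ) ^ 2 * hsum
  · linear_combination (-(c3 : ℚ) - 1) * heq + ((c3 : ℚ) + c3 ^ 2) * hsum

/-- Case-2 singlets give deformations: if `(c1,c2,c3)` with `c1,c2 ≥ 0`, `c3 ≤ -2` satisfies
`c1·ν1 + c2·ν2 + c3·ν3 = c3 + 1` for the `α`-sector triple `(ν1,ν2,ν3)` (positive rationals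
summing to 1 with denominators dividing `r`), then setting `n = -c3` and taking the sector
triples `ν_k^β ≡ (n-1)·ν_k (mod 1)` and `ν_k^γ ≡ n·ν_k (mod 1)` with values in `[0,1)`, we
have `c1·ν1^γ + c2·ν2^γ + c3·ν3^γ = 0` and `c1·ν1^β + c2·ν2^β + c3·ν3^β = -1`. -/
theorem case2_singlet_gives_interior_deformation
    (r : ℤ) (hr : 0 < r) (ν1 ν2 ν3 : ℚ)
    (h1 : 0 < ν1) (h2 : 0 < ν2) (h3 : 0 < ν3)
    (hint1 : ∃ k : ℤ, (r : ℚ) * ν1 = k)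
    (hint2 : ∃ k : ℤ, (r : ℚ) * ν2 = k)
    (hint3 : ∃ k : ℤ, (r : ℚ) * ν3 = k)
    (hsum : ν1 + ν2 + ν3 = 1)
    (c1 c2 c3 : ℤ) (hc1 : 0 ≤ c1) (hc2 : 0 ≤ c2) (hc3 : c3 ≤ -2)
    (heq : (c1 : ℚ) * ν1 + c2 * ν2 + c3 * ν3 = c3 + 1)
    (n : ℤ) (hn : n = -c3)
    (ν1β ν2β ν3β ν1γ ν2γ ν3γ : ℚ)
    (hβ1 : ν1β = Int.fract (((n : ℚ) - 1) * ν1))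
    (hβ2 : ν2β = Int.fract (((n : ℚ) - 1) * ν2))
    (hβ3 : ν3β = Int.fract (((n : ℚ) - 1) * ν3))
    (hγ1 : ν1γ = Int.fract ((n : ℚ) * ν1))
    (hγ2 : ν2γ = Int.fract ((n : ℚ) * ν2))
    (hγ3 : ν3γ = Int.fract ((n : ℚ) * ν3)) :
    (c1 : ℚ) * ν1γ + c2 * ν2γ + c3 * ν3γ = 0 ∧
    (c1 : ℚ) * ν1β + c2 * ν2β + c3 * ν3β = -1 :=
  case2_singlet_gives_interior_deformation_general ν1 ν2 ν3 h1 h2 hsum c1 c2 c3 hc1 hc2 hc3 heq n hn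
    ν1β ν2β ν3β ν1γ ν2γ ν3γ hβ1 hβ2 hβ3 hγ1 hγ2 hγ3
end

section
/- Let r be prime, a, b not divisible by r, and fix a twisted sector triple (ν1, ν2, ν3) = (i/r, (ia mod r)/r, (ib mod r)/r) with sum 1. If c1, c2, c3 are non-negative integers with c1·ν1 + c2·ν2 + c3·ν3 = ν3 and (c1,c2,c3) ≠ (0,0,1), then necessarily c3 = 0. -/
/-! All three weights are positive, because the prime `r` divides none of `i`, `a`, `b`. So if
`c3 ≥ 1`, then `c1·ν1 + c2·ν2 + (c3 - 1)·ν3 = 0` is a sum of non-negative terms, each of which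
must vanish. -/

theorem Prime.mul_emod_pos_of_lt {r i a : ℤ} (hr : Prime r) (hi0 : 0 < i) (hir : i < r)
    (ha : ¬ r ∣ a) : 0 < i * a % r := by
  have hri : ¬ r ∣ i := fun h => (Int.le_of_dvd hi0 h).not_gt hir
  have hria : ¬ r ∣ i * a := by simpa [hr.dvd_mul] using And.intro hri ha
  exact (Int.emod_pos_of_not_dvd hria).resolve_left hr.ne_zero

theorem eq_zero_zero_one_of_mul_add_mul_add_mul_eq {K : Type*} [CommRing K] [LinearOrder K]
    [IsStrictOrderedRing K] {ν1 ν2 ν3 : K}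
    (h1 : 0 < ν1) (h2 : 0 < ν2) (h3 : 0 < ν3) {c1 c2 c3 : ℕ}
    (heq : (c1 : K) * ν1 + c2 * ν2 + c3 * ν3 = ν3) (hc3 : c3 ≠ 0) :
    c1 = 0 ∧ c2 = 0 ∧ c3 = 1 := by
  obtain ⟨k, rfl⟩ := Nat.exists_eq_succ_of_ne_zero hc3
  have hzero : (c1 : K) * ν1 + c2 * ν2 + k * ν3 = 0 := by push_cast at heq; linarith
  rw [add_eq_zero_iff_of_nonneg (by positivity) (by positivity),
    add_eq_zero_iff_of_nonneg (by positivity) (by positivity)] at hzero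
  simp_all [h1.ne', h2.ne', h3.ne']

theorem case1_singlet_c3_eq_zero_general
    (r a b : ℤ) (hr : Prime r) (hra : ¬ r ∣ a) (hrb : ¬ r ∣ b)
    (i : ℤ) (hi0 : 0 < i) (hir : i < r)
    (ν1 ν2 ν3 : ℚ)
    (hν1 : ν1 = ((i : ℚ)) / r)
    (hν2 : ν2 = (((i * a) % r : ℤ) : ℚ) / r)
    (hν3 : ν3 = (((i * b) % r : ℤ) : ℚ) / r)
    (c1 c2 c3 : ℕ)
    (heq : (c1 : ℚ) * ν1 + c2 * ν2 + c3 * ν3 = ν3)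
    (hne : ¬(c1 = 0 ∧ c2 = 0 ∧ c3 = 1)) :
    c3 = 0 := by
  have hrq : (0 : ℚ) < r := by exact_mod_cast hi0.trans hir
  have h1 : 0 < ν1 := hν1 ▸ div_pos (by exact_mod_cast hi0) hrq
  have h2 : 0 < ν2 := hν2 ▸ div_pos (by exact_mod_cast hr.mul_emod_pos_of_lt hi0 hir hra) hrq
  have h3 : 0 < ν3 := hν3 ▸ div_pos (by exact_mod_cast hr.mul_emod_pos_of_lt hi0 hir hrb) hrq
  by_contra hc3
  exact hne (eq_zero_zero_one_of_mul_add_mul_add_mul_eq h1 h2 h3 heq hc3)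

/-- For a twisted sector triple `(ν1,ν2,ν3) = (i/r, (ia mod r)/r, (ib mod r)/r)` with sum 1
(`r` prime, `r ∤ a`, `r ∤ b`): if non-negative integers `c1,c2,c3` satisfy
`c1·ν1 + c2·ν2 + c3·ν3 = ν3` and `(c1,c2,c3) ≠ (0,0,1)`, then `c3 = 0`. -/
theorem case1_singlet_c3_eq_zero
    (r a b : ℤ) (hr : Prime r) (hra : ¬ r ∣ a) (hrb : ¬ r ∣ b)
    (i : ℤ) (hi0 : 0 < i) (hir : i < r)
    (ν1 ν2 ν3 : ℚ)
    (hν1 : ν1 = ((i : ℚ)) / r)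
    (hν2 : ν2 = (((i * a) % r : ℤ) : ℚ) / r)
    (hν3 : ν3 = (((i * b) % r : ℤ) : ℚ) / r)
    (hsum : ν1 + ν2 + ν3 = 1)
    (c1 c2 c3 : ℕ)
    (heq : (c1 : ℚ) * ν1 + c2 * ν2 + c3 * ν3 = ν3)
    (hne : ¬(c1 = 0 ∧ c2 = 0 ∧ c3 = 1)) :
    c3 = 0 :=
  case1_singlet_c3_eq_zero_general r a b hr hra hrb i hi0 hir ν1 ν2 ν3 hν1 hν2 hν3 c1 c2 c3 heq hne
end
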